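/- arXiv:1507.01905 — 3 statements merged into one kernel-verified Lean document; each statement's English description precedes it below -/
import Mathlib

section
/- For every real number k > 0 and real p ≥ 1, the ratio Γ(k+x)^p / (Γ(x)^{p-1} · Γ(kp+x)) converges to 1 as x → ∞ (through positive reals). Consequently, the quantity (Γ(kp+1)/Γ(k+1)^p) · Γ(k+x)^p/(Γ(x)^{p-1}Γ(kp+x)) converges to Γ(kp+1)/Γ(k+1)^p. -/
open Real Filter

/-!
Wendel's limit `Γ(x + a) / (Γ(x) x^a) → 1` holds for every real `a`. For `0 < a < 1`,
log-convexity of `Γ` between `x` and `x + 1` gives `Γ(x + a) ≤ Γ(x) x^a`, and the same bound at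
`x + a` with exponent `1 - a` gives `(x / (x + a))^(1 - a) ≤ Γ(x + a) / (Γ(x) x^a)`; the functional
equation `Γ(x + 1) = x Γ(x)` then moves `a` by integers. The ratio in the theorem is
`(Γ(x + k) / (Γ(x) x^k))^p / (Γ(x + kp) / (Γ(x) x^(kp)))`, a quotient of two instances of the limit.
-/

namespace Real

theorem tendsto_add_div_self_atTop (a : ℝ) : Tendsto (fun x : ℝ => (x + a) / x) atTop (nhds 1) := by
  have h : Tendsto (fun x : ℝ => 1 + a / x) atTop (nhds (1 + 0)) :=
    tendsto_const_nhds.add (tendsto_const_nhds.div_atTop tendsto_id)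
  rw [add_zero] at h
  refine h.congr' ?_
  filter_upwards [eventually_ne_atTop 0] with x hx
  rw [add_div, div_self hx, add_comm]

variable {x a : ℝ}

theorem Gamma_add_le_Gamma_mul_rpow (hx : 0 < x) (ha : 0 < a) (ha1 : a < 1) :
    Gamma (x + a) ≤ Gamma x * x ^ a := by
  have hΓ := Gamma_pos_of_pos hx
  have h := Gamma_mul_add_mul_le_rpow_Gamma_mul_rpow_Gamma hx (by linarith : 0 < x + 1)
    (sub_pos.mpr ha1) ha (sub_add_cancel 1 a)
  calc Gamma (x + a) = Gamma ((1 - a) * x + a * (x + 1)) := by ring_nf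
    _ ≤ Gamma x ^ (1 - a) * Gamma (x + 1) ^ a := h
    _ = Gamma x * x ^ a := by
      rw [Gamma_add_one hx.ne', mul_rpow hx.le hΓ.le, mul_left_comm, ← rpow_add hΓ,
        sub_add_cancel, rpow_one, mul_comm]

theorem tendsto_Gamma_add_div_Gamma_mul_rpow_of_lt_one (ha0 : 0 ≤ a) (ha1 : a < 1) :
    Tendsto (fun x => Gamma (x + a) / (Gamma x * x ^ a)) atTop (nhds 1) := by
  rcases ha0.eq_or_lt with rfl | ha0
  · refine tendsto_const_nhds.congr' ?_
    filter_upwards [eventually_gt_atTop 0] with x hx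
    simp [(Gamma_pos_of_pos hx).ne']
  have hlow : Tendsto (fun x : ℝ => (x / (x + a)) ^ (1 - a)) atTop (nhds 1) := by
    have h := (tendsto_add_div_self_atTop a).inv₀ one_ne_zero
    simp only [inv_div, inv_one] at h
    simpa using h.rpow_const (p := 1 - a) (Or.inl one_ne_zero)
  refine tendsto_of_tendsto_of_tendsto_of_le_of_le' hlow tendsto_const_nhds ?_ ?_
  · filter_upwards [eventually_gt_atTop 0] with x hx
    have hxa : 0 < x + a := by linarith
    have h := Gamma_add_le_Gamma_mul_rpow hxa (sub_pos.mpr ha1) (by linarith)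
    rw [add_add_sub_cancel, Gamma_add_one hx.ne'] at h
    rw [le_div_iff₀ (mul_pos (Gamma_pos_of_pos hx) (rpow_pos_of_pos hx a)), div_rpow hx.le hxa.le,
      div_mul_eq_mul_div, div_le_iff₀ (by positivity)]
    calc x ^ (1 - a) * (Gamma x * x ^ a) = x * Gamma x := by
          rw [mul_left_comm, ← rpow_add hx, sub_add_cancel, rpow_one, mul_comm]
      _ ≤ _ := h
  · filter_upwards [eventually_gt_atTop 0] with x hx
    rw [div_le_one (mul_pos (Gamma_pos_of_pos hx) (rpow_pos_of_pos hx a))]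
    exact Gamma_add_le_Gamma_mul_rpow hx ha0 ha1

theorem tendsto_Gamma_add_div_Gamma_mul_rpow_add_one_iff :
    Tendsto (fun x => Gamma (x + (a + 1)) / (Gamma x * x ^ (a + 1))) atTop (nhds 1) ↔
      Tendsto (fun x => Gamma (x + a) / (Gamma x * x ^ a)) atTop (nhds 1) := by
  rw [iff_comm, ← tendsto_mul_iff_of_ne_zero (tendsto_add_div_self_atTop a) one_ne_zero, mul_one]
  refine tendsto_congr' ?_
  filter_upwards [eventually_gt_atTop 0, eventually_gt_atTop (-a)] with x hx hxa
  rw [← add_assoc, Gamma_add_one (by linarith), rpow_add_one hx.ne']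
  field_simp

theorem tendsto_Gamma_add_div_Gamma_mul_rpow (a : ℝ) :
    Tendsto (fun x => Gamma (x + a) / (Gamma x * x ^ a)) atTop (nhds 1) := by
  rw [← Int.fract_add_floor a]
  induction ⌊a⌋ using Int.induction_on with
  | zero =>
    simpa using
      tendsto_Gamma_add_div_Gamma_mul_rpow_of_lt_one (Int.fract_nonneg a) (Int.fract_lt_one a)
  | succ i ih =>
    rw [Int.cast_add, Int.cast_one, ← add_assoc]
    exact tendsto_Gamma_add_div_Gamma_mul_rpow_add_one_iff.mpr ih
  | pred i ih =>
    rw [Int.cast_sub, Int.cast_one, ← add_sub_assoc] at *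
    rw [← sub_add_cancel (Int.fract a + _) 1] at ih
    exact tendsto_Gamma_add_div_Gamma_mul_rpow_add_one_iff.mp ih

end Real

theorem gamma_ratio_power_tendsto_general (k p : ℝ) :
    Tendsto (fun x : ℝ =>
        Gamma (k + x) ^ p / (Gamma x ^ (p - 1) * Gamma (k * p + x))) atTop (nhds 1) ∧
    Tendsto (fun x : ℝ =>
        (Gamma (k * p + 1) / Gamma (k + 1) ^ p) *
          (Gamma (k + x) ^ p / (Gamma x ^ (p - 1) * Gamma (k * p + x)))) atTop
      (nhds (Gamma (k * p + 1) / Gamma (k + 1) ^ p)) := by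
  have hpow : Tendsto (fun x => (Gamma (x + k) / (Gamma x * x ^ k)) ^ p) atTop (nhds 1) := by
    simpa using (tendsto_Gamma_add_div_Gamma_mul_rpow k).rpow_const (Or.inl one_ne_zero) (p := p)
  have hratio := hpow.div (tendsto_Gamma_add_div_Gamma_mul_rpow (k * p)) one_ne_zero
  rw [div_one] at hratio
  have h : Tendsto (fun x : ℝ =>
      Gamma (k + x) ^ p / (Gamma x ^ (p - 1) * Gamma (k * p + x))) atTop (nhds 1) := by
    refine hratio.congr' ?_
    filter_upwards [eventually_gt_atTop 0, eventually_gt_atTop (-k)] with x hx hxk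
    have hΓ := Gamma_pos_of_pos hx
    have hΓk := Gamma_pos_of_pos (neg_lt_iff_pos_add.mp hxk)
    rw [Pi.div_apply, div_rpow hΓk.le (by positivity), mul_rpow hΓ.le (by positivity),
      ← rpow_mul hx.le, rpow_sub_one hΓ.ne', add_comm k, add_comm (k * p)]
    field_simp
  exact ⟨h, by simpa using h.const_mul (Gamma (k * p + 1) / Gamma (k + 1) ^ p)⟩

theorem gamma_ratio_power_tendsto (k p : ℝ) (hk : 0 < k) (hp : 1 ≤ p) :
    Tendsto (fun x : ℝ =>
        Gamma (k + x) ^ p / (Gamma x ^ (p - 1) * Gamma (k * p + x))) atTop (nhds 1) ∧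
    Tendsto (fun x : ℝ =>
        (Gamma (k * p + 1) / Gamma (k + 1) ^ p) *
          (Gamma (k + x) ^ p / (Gamma x ^ (p - 1) * Gamma (k * p + x)))) atTop
      (nhds (Gamma (k * p + 1) / Gamma (k + 1) ^ p)) :=
  gamma_ratio_power_tendsto_general k p
end

section
/- Let ν, n₀ ∈ ℕ, δ ≥ 0, s > 0, and define c(0,k) = 1 and c(N+1,k) = c(N,k) · S(N)/(S(N) + s·k) where S(N) = ν + N + δ·n(N) and n(N) ≤ n₀ + N for all N. Then for every k > 0 there is a constant C such that c(N,k) ≤ C · N^{-sk/(1+δ)} for all N ≥ 1. -/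
/-!
Each factor of `c(N, k) = ∏_{j<N} S(j) / (S(j) + sk)` is at most `1 - sk / ((1+δ)j + a + sk)`
with `a = ν + δ n₀`, hence at most `exp (-t / (j + c₀))` for `t = sk/(1+δ)`, `c₀ = (a + sk)/(1+δ)`.
Comparing `∑_{j<N} 1/(j + c₀)` with `log (N + c₀) - log c₀` gives
`c(N, k) ≤ (c₀ / (N + c₀))^t ≤ c₀^t N^{-t}`.
-/

open Real Finset

lemma div_add_le_exp_neg_div {x y u : ℝ} (hx : 0 ≤ x) (hxy : x ≤ y) (hu : 0 < u) :
    x / (x + u) ≤ exp (-(u / (y + u))) := by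
  have hxu : 0 < x + u := by linarith
  calc x / (x + u) = 1 - u / (x + u) := by field_simp; ring
    _ ≤ 1 - u / (y + u) := by gcongr
    _ ≤ exp (-(u / (y + u))) := by linarith [add_one_le_exp (-(u / (y + u)))]

lemma log_add_sub_log_le_sum_inv {c : ℝ} (hc : 0 < c) (N : ℕ) :
    log (N + c) - log c ≤ ∑ j ∈ range N, ((j : ℝ) + c)⁻¹ := by
  induction N with
  | zero => simp
  | succ m ih =>
    have hm : 0 < (m : ℝ) + c := by positivity
    have hstep : log ((m : ℝ) + 1 + c) - log (m + c) ≤ ((m : ℝ) + c)⁻¹ := by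
      rw [← log_div (by positivity) hm.ne']
      calc log (((m : ℝ) + 1 + c) / (m + c)) ≤ ((m : ℝ) + 1 + c) / (m + c) - 1 :=
            log_le_sub_one_of_pos (by positivity)
        _ = ((m : ℝ) + c)⁻¹ := by field_simp; ring
    rw [sum_range_succ]
    push_cast
    linarith

/-- Discrete form of `Γ(N + a/b) / Γ(N + (a+u)/b) = O(N^{-u/b})`. -/
theorem prod_div_add_le_mul_rpow {x : ℕ → ℝ} {a b u : ℝ} (ha : 0 ≤ a) (hb : 0 < b) (hu : 0 < u)
    (hx₀ : ∀ j, 0 ≤ x j) (hx : ∀ j, x j ≤ b * j + a) {N : ℕ} (hN : 0 < N) :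
    ∏ j ∈ range N, x j / (x j + u) ≤ ((a + u) / b) ^ (u / b) * (N : ℝ) ^ (-(u / b)) := by
  set c := (a + u) / b
  set t := u / b
  have hc : 0 < c := by positivity
  have ht : 0 < t := by positivity
  have hfactor (j : ℕ) : x j / (x j + u) ≤ exp (-(t * ((j : ℝ) + c)⁻¹)) := by
    have hshift : u / (b * j + a + u) = t * ((j : ℝ) + c)⁻¹ := by
      simp only [c, t]; field_simp; ring
    rw [← hshift]
    exact div_add_le_exp_neg_div (hx₀ j) (hx j) hu
  calc ∏ j ∈ range N, x j / (x j + u)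
      ≤ ∏ j ∈ range N, exp (-(t * ((j : ℝ) + c)⁻¹)) :=
        prod_le_prod (fun j _ => div_nonneg (hx₀ j) (by linarith [hx₀ j])) fun j _ => hfactor j
    _ = exp (-(t * ∑ j ∈ range N, ((j : ℝ) + c)⁻¹)) := by
        rw [← exp_sum, mul_sum, ← sum_neg_distrib]
    _ ≤ exp (-(t * (log (N + c) - log c))) := by
        gcongr
        exact log_add_sub_log_le_sum_inv hc N
    _ = c ^ t * ((N : ℝ) + c) ^ (-t) := by
        rw [rpow_def_of_pos hc, rpow_def_of_pos (by positivity), ← exp_add]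
        ring_nf
    _ ≤ c ^ t * (N : ℝ) ^ (-t) := by
        have hN' : (0 : ℝ) < N := by exact_mod_cast hN
        exact mul_le_mul_of_nonneg_left
          (rpow_le_rpow_of_nonpos hN' (by linarith) (by linarith)) (rpow_nonneg hc.le t)

theorem pref_attach_normalizer_decay_general
    (ν n₀ : ℕ) (δ s : ℝ) (hδ : 0 ≤ δ) (hs : 0 < s)
    (n : ℕ → ℕ) (hn : ∀ N, n N ≤ n₀ + N)
    (S : ℕ → ℝ) (hS : ∀ N, S N = (ν : ℝ) + N + δ * n N)
    (c : ℕ → ℝ → ℝ)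
    (hc0 : ∀ k, c 0 k = 1)
    (hcrec : ∀ N k, c (N + 1) k = c N k * (S N / (S N + s * k))) :
    ∀ k : ℝ, 0 < k → ∃ C : ℝ, ∀ N : ℕ, 1 ≤ N →
      c N k ≤ C * (N : ℝ) ^ (-(s * k) / (1 + δ)) := by
  intro k hk
  have hS₀ (j : ℕ) : 0 ≤ S j := by rw [hS]; positivity
  have hS_le (j : ℕ) : S j ≤ (1 + δ) * j + (ν + δ * n₀) := by
    have : (n j : ℝ) ≤ n₀ + j := by exact_mod_cast hn j
    rw [hS]; nlinarith
  have hprod (N : ℕ) : c N k = ∏ j ∈ range N, S j / (S j + s * k) :=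
    (prod_range_induction _ (c · k) (hc0 k) N fun j _ => hcrec j k).symm
  refine ⟨((ν + δ * n₀ + s * k) / (1 + δ)) ^ (s * k / (1 + δ)), fun N hN => ?_⟩
  rw [hprod, neg_div]
  exact prod_div_add_le_mul_rpow (by positivity) (by linarith) (by positivity) hS₀ hS_le hN

theorem pref_attach_normalizer_decay
    (ν n₀ : ℕ) (δ s : ℝ) (hδ : 0 ≤ δ) (hs : 0 < s)
    (n : ℕ → ℕ) (hn0 : n 0 = n₀) (hn : ∀ N, n N ≤ n₀ + N)
    (S : ℕ → ℝ) (hS : ∀ N, S N = (ν : ℝ) + N + δ * n N)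
    (c : ℕ → ℝ → ℝ)
    (hc0 : ∀ k, c 0 k = 1)
    (hcrec : ∀ N k, c (N + 1) k = c N k * (S N / (S N + s * k))) :
    ∀ k : ℝ, 0 < k → ∃ C : ℝ, ∀ N : ℕ, 1 ≤ N →
      c N k ≤ C * (N : ℝ) ^ (-(s * k) / (1 + δ)) :=
  pref_attach_normalizer_decay_general ν n₀ δ s hδ hs n hn S hS c hc0 hcrec
end

section
/- With c(N,k) defined by c(0,k)=1 and c(N+1,k) = c(N,k)·S(N)/(S(N)+s·k) for a sequence S(N) > 0 and s, k > 0, and for any p ≥ 1, the ratio c(N,k)^p / c(N,kp) is nonincreasing in N and hence bounded by 1 for all N. -/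
lemma key_ineq (x y p : ℝ) (hx : 0 < x) (hy : 0 < y) (hp : 1 ≤ p) :
    x ^ p * (x + y * p) ≤ (x + y) ^ p * x := by
  have hyx : 0 < y / x := div_pos hy hx
  have hb : 1 + p * (y / x) ≤ (1 + y / x) ^ p :=
    one_add_mul_self_le_rpow_one_add (by linarith) hp
  have hxy : x + y = x * (1 + y / x) := by field_simp
  have h2 : (x + y) ^ p = x ^ p * (1 + y / x) ^ p := by
    rw [hxy, Real.mul_rpow hx.le (by positivity)]
  rw [h2]
  have hxp : 0 < x ^ p := Real.rpow_pos_of_pos hx p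
  have h3 : x + y * p ≤ (1 + y / x) ^ p * x := by
    calc x + y * p = (1 + p * (y / x)) * x := by field_simp
    _ ≤ (1 + y / x) ^ p * x := by nlinarith
  calc x ^ p * (x + y * p) ≤ x ^ p * ((1 + y / x) ^ p * x) := by nlinarith
  _ = x ^ p * (1 + y / x) ^ p * x := by ring

theorem c_ratio_antitone
    (S : ℕ → ℝ) (hS : ∀ N, 0 < S N) (s k p : ℝ) (hs : 0 < s) (hk : 0 < k) (hp : 1 ≤ p)
    (c : ℕ → ℝ → ℝ)
    (hc0 : ∀ k, c 0 k = 1)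
    (hcrec : ∀ N k, c (N + 1) k = c N k * (S N / (S N + s * k))) :
    (Antitone (fun N => c N k ^ p / c N (k * p))) ∧
      ∀ N, c N k ^ p / c N (k * p) ≤ 1 := by
  have hpos : ∀ (k' : ℝ), 0 < k' → ∀ N, 0 < c N k' := by
    intro k' hk' N
    induction N with
    | zero => rw [hc0]; exact one_pos
    | succ n ih =>
      rw [hcrec]
      have : 0 < S n + s * k' := by nlinarith [mul_pos hs hk', hS n]
      exact mul_pos ih (div_pos (hS n) this)
  have hkp : 0 < k * p := mul_pos hk (by linarith)
  have hanti : Antitone (fun N => c N k ^ p / c N (k * p)) := by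
    apply antitone_nat_of_succ_le
    intro n
    have hck := hpos k hk n
    have hckp := hpos (k * p) hkp n
    have hSn := hS n
    have hd1 : 0 < S n + s * k := by positivity
    have hd2 : 0 < S n + s * (k * p) := by positivity
    have heq' : s * (k * p) = s * k * p := by ring
    have hkey := key_ineq (S n) (s * k) p hSn (by positivity) hp
    have hQ : (S n / (S n + s * k)) ^ p * ((S n + s * (k * p)) / S n) ≤ 1 := by
      rw [Real.div_rpow hSn.le hd1.le, heq', div_mul_div_comm,
        div_le_one (by positivity)]
      exact hkey
    have heqr : c (n + 1) k ^ p / c (n + 1) (k * p)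
        = (c n k ^ p / c n (k * p)) *
          ((S n / (S n + s * k)) ^ p * ((S n + s * (k * p)) / S n)) := by
      rw [hcrec, hcrec, Real.mul_rpow hck.le (by positivity)]
      field_simp
    have hA : 0 ≤ c n k ^ p / c n (k * p) := by positivity
    simp only [heqr]
    exact mul_le_of_le_one_right hA hQ
  refine ⟨hanti, fun N => ?_⟩
  have := hanti (Nat.zero_le N)
  simp only [hc0] at this
  simpa [Real.one_rpow] using this
end
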